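/- arXiv:2105.02495 — 3 statements merged into one kernel-verified Lean document; each statement's English description precedes it below -/
import Mathlib

section
/- Let γ : [0,1] → X be a continuous curve in a metric space with finite energy E(γ). Then for every ε > 0 there exists δ > 0 such that for every partition R of [0,1] with mesh |R| ≤ δ, one has E(γ, R) ≥ E(γ) − ε. In particular, E(γ, R) → E(γ) as |R| → 0. -/
open Set MeasureTheory Filter
open scoped ENNReal

/-- Energy sum of a curve along the partition points `r 0 < r 1 < ... < r (m+1)`. -/
noncomputable def energySum {X : Type*} [MetricSpace X] (γ : ℝ → X) {m : ℕ}
    (r : Fin (m + 2) → ℝ) : ℝ :=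
  ∑ k : Fin (m + 1), dist (γ (r k.castSucc)) (γ (r k.succ)) ^ 2 / (r k.succ - r k.castSucc)

/-- `r` enumerates a partition `0 = r 0 < r 1 < ... < r (m+1) = 1` of `[0, 1]`. -/
def IsPartition {m : ℕ} (r : Fin (m + 2) → ℝ) : Prop :=
  StrictMono r ∧ r 0 = 0 ∧ r (Fin.last (m + 1)) = 1

/-- The energy of a curve on `[0,1]`: supremum of the energy sums over all partitions. -/
noncomputable def energy {X : Type*} [MetricSpace X] (γ : ℝ → X) : ℝ≥0∞ :=
  ⨆ (m : ℕ) (r : Fin (m + 2) → ℝ) (_ : IsPartition r), ENNReal.ofReal (energySum γ r)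

/-! Choose a partition `s` whose energy sum is within `ε/2` of `E(γ)`. The energy sum is
continuous in the partition points, so it stays within `ε/2` on partitions near `s`. If `δ` is
smaller than every gap of `s`, a partition `r` of mesh at most `δ` has a point in `(sᵢ - δ, sᵢ]`
for each `i`, and these points form a coarsening of `r` close to `s`. Coarsening can only
decrease the energy sum, by the triangle inequality and Sedrakyan's inequality
`(∑ aₖ)² / ∑ tₖ ≤ ∑ aₖ² / tₖ`. -/

lemma dist_sq_div_le_sum_Ico {X : Type*} [PseudoMetricSpace X] (x : ℕ → X) (t : ℕ → ℝ)
    {a b : ℕ} (hab : a ≤ b) (ht : ∀ k ∈ Finset.Ico a b, t k < t (k + 1)) :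
    dist (x a) (x b) ^ 2 / (t b - t a) ≤
      ∑ k ∈ Finset.Ico a b, dist (x k) (x (k + 1)) ^ 2 / (t (k + 1) - t k) := by
  have hlen : t b - t a = ∑ k ∈ Finset.Ico a b, (t (k + 1) - t k) :=
    (Finset.sum_Ico_sub t hab).symm
  calc dist (x a) (x b) ^ 2 / (t b - t a)
      ≤ (∑ k ∈ Finset.Ico a b, dist (x k) (x (k + 1))) ^ 2 / (t b - t a) := by
        gcongr
        · rw [hlen]
          exact Finset.sum_nonneg fun k hk => (sub_pos.2 (ht k hk)).le
        · exact dist_le_Ico_sum_dist x hab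
    _ ≤ _ := by
        rw [hlen]
        exact Finset.sq_sum_div_le_sum_sq_div _ _ fun k hk => sub_pos.2 (ht k hk)

lemma sum_range_sum_Ico_eq {M : Type*} [AddCommMonoid M] (f : ℕ → M) {J : ℕ → ℕ}
    (hJ : Monotone J) (n : ℕ) :
    ∑ i ∈ Finset.range n, ∑ k ∈ Finset.Ico (J i) (J (i + 1)), f k =
      ∑ k ∈ Finset.Ico (J 0) (J n), f k := by
  induction n with
  | zero => simp
  | succ n ih =>
    rw [Finset.sum_range_succ, ih, Finset.sum_Ico_consecutive _ (hJ n.zero_le) (hJ n.le_succ)]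

section Energy

variable {X : Type*} [MetricSpace X] (γ : ℝ → X)

lemma energySum_eq_sum_range {m : ℕ} (ρ : ℕ → ℝ) :
    energySum γ (fun i : Fin (m + 2) => ρ i) =
      ∑ k ∈ Finset.range (m + 1), dist (γ (ρ k)) (γ (ρ (k + 1))) ^ 2 / (ρ (k + 1) - ρ k) :=
  Fin.sum_univ_eq_sum_range (fun k => dist (γ (ρ k)) (γ (ρ (k + 1))) ^ 2 / (ρ (k + 1) - ρ k)) _

lemma energySum_nonneg {m : ℕ} {r : Fin (m + 2) → ℝ} (hr : Monotone r) : 0 ≤ energySum γ r :=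
  Finset.sum_nonneg fun k _ => div_nonneg (sq_nonneg _) (sub_nonneg.2 (hr k.castSucc_le_succ))

theorem energySum_comp_le {m n : ℕ} {r : Fin (m + 2) → ℝ} (hr : StrictMono r)
    {j : Fin (n + 2) → Fin (m + 2)} (hj : StrictMono j) :
    energySum γ (r ∘ j) ≤ energySum γ r := by
  set ρ : ℕ → ℝ := fun k => r (Fin.clamp k (m + 1))
  set J : ℕ → ℕ := fun i => j (Fin.clamp i (n + 1))
  have hclamp : ∀ {p : ℕ} (i : Fin (p + 1)), Fin.clamp i p = i :=
    fun i => Fin.ext (min_eq_left i.is_le)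
  have hρ : r = fun i : Fin (m + 2) => ρ i := funext fun i => by
    show r i = r (Fin.clamp i (m + 1))
    rw [hclamp]
  have hρJ : r ∘ j = fun i : Fin (n + 2) => ρ (J i) := funext fun i => by
    show r (j i) = r (Fin.clamp (j (Fin.clamp i (n + 1))) (m + 1))
    rw [hclamp, hclamp]
  have hJ : Monotone J := fun a b hab =>
    hj.monotone (Fin.mk_le_mk.2 (min_le_min_right _ hab))
  have hJ_le : ∀ i, J i ≤ m + 1 := fun i => Fin.is_le _
  have hρ_step : ∀ k < m + 1, ρ k < ρ (k + 1) := fun k hk => by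
    refine hr (Fin.lt_def.2 ?_)
    simp only [Fin.clamp]
    omega
  set e : ℕ → ℝ := fun k => dist (γ (ρ k)) (γ (ρ (k + 1))) ^ 2 / (ρ (k + 1) - ρ k)
  rw [hρJ, energySum_eq_sum_range γ fun i => ρ (J i), hρ, energySum_eq_sum_range]
  calc ∑ i ∈ Finset.range (n + 1),
        dist (γ (ρ (J i))) (γ (ρ (J (i + 1)))) ^ 2 / (ρ (J (i + 1)) - ρ (J i))
      ≤ ∑ i ∈ Finset.range (n + 1), ∑ k ∈ Finset.Ico (J i) (J (i + 1)), e k :=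
        Finset.sum_le_sum fun i _ => dist_sq_div_le_sum_Ico (γ ∘ ρ) ρ (hJ i.le_succ)
          fun k hk => hρ_step k ((Finset.mem_Ico.1 hk).2.trans_le (hJ_le _))
    _ = ∑ k ∈ Finset.Ico (J 0) (J (n + 1)), e k := sum_range_sum_Ico_eq e hJ _
    _ ≤ ∑ k ∈ Finset.range (m + 1), e k := by
        refine Finset.sum_le_sum_of_subset_of_nonneg ?_ fun k hk _ => ?_
        · exact fun k hk => Finset.mem_range.2 ((Finset.mem_Ico.1 hk).2.trans_le (hJ_le _))
        · exact div_nonneg (sq_nonneg _) (sub_pos.2 (hρ_step k (Finset.mem_range.1 hk))).le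

lemma energySum_continuousOn {S : Set ℝ} (hγ : ContinuousOn γ S) (n : ℕ) :
    ContinuousOn (fun t : Fin (n + 2) → ℝ => energySum γ t)
      {t | (∀ i, t i ∈ S) ∧ StrictMono t} := by
  have hγt : ∀ i : Fin (n + 2),
      ContinuousOn (fun t : Fin (n + 2) → ℝ => γ (t i)) {t | (∀ i, t i ∈ S) ∧ StrictMono t} :=
    fun i => hγ.comp (continuous_apply i).continuousOn fun t ht => ht.1 i
  refine continuousOn_finsetSum _ fun k _ => ContinuousOn.div ?_ ?_ ?_
  · exact (continuous_dist.comp_continuousOn ((hγt k.castSucc).prodMk (hγt k.succ))).pow 2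
  · exact ((continuous_apply k.succ).sub (continuous_apply k.castSucc)).continuousOn
  · exact fun t ht => sub_ne_zero.2 (ht.2 k.castSucc_lt_succ).ne'

theorem exists_lt_energySum_of_ofReal_lt {c : ℝ} (h : ENNReal.ofReal c < energy γ) :
    ∃ (n : ℕ) (s : Fin (n + 2) → ℝ), IsPartition s ∧ c < energySum γ s := by
  simp only [energy, lt_iSup_iff, ENNReal.ofReal_lt_ofReal_iff'] at h
  obtain ⟨n, s, hs, hc, -⟩ := h
  exact ⟨n, s, hs, hc⟩

end Energy

namespace IsPartition

variable {m : ℕ} {r : Fin (m + 2) → ℝ}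

lemma mem_Icc (hr : IsPartition r) (i : Fin (m + 2)) : r i ∈ Icc (0 : ℝ) 1 :=
  ⟨hr.2.1 ▸ hr.1.monotone (Fin.zero_le i), hr.2.2 ▸ hr.1.monotone (Fin.le_last i)⟩

theorem exists_mem_Ioc (hr : IsPartition r) {δ : ℝ} (hδ : 0 < δ)
    (hmesh : ∀ k : Fin (m + 1), r k.succ - r k.castSucc ≤ δ) {t : ℝ} (ht : t ∈ Icc (0 : ℝ) 1) :
    ∃ k, r k ∈ Ioc (t - δ) t := by
  obtain ⟨k, hk, hmax⟩ := (Finset.univ.filter fun k => r k ≤ t).exists_max_image r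
    ⟨0, by simp [hr.2.1, ht.1]⟩
  simp only [Finset.mem_filter, Finset.mem_univ, true_and] at hk hmax
  refine ⟨k, ?_, hk⟩
  rcases Fin.eq_castSucc_or_eq_last k with ⟨c, rfl⟩ | rfl
  · have : t < r c.succ := lt_of_not_ge fun h => (hmax _ h).not_gt (hr.1 c.castSucc_lt_succ)
    linarith [hmesh c]
  · linarith [hr.2.2, ht.2]

theorem exists_strictMono_mem_Ioc (hr : IsPartition r) {δ : ℝ} (hδ : 0 < δ)
    (hmesh : ∀ k : Fin (m + 1), r k.succ - r k.castSucc ≤ δ) {n : ℕ} {s : Fin (n + 2) → ℝ}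
    (hs : IsPartition s) (hgap : ∀ k : Fin (n + 1), δ < s k.succ - s k.castSucc) :
    ∃ j : Fin (n + 2) → Fin (m + 2), StrictMono j ∧ ∀ i, r (j i) ∈ Ioc (s i - δ) (s i) := by
  choose j hj using fun i => hr.exists_mem_Ioc hδ hmesh (hs.mem_Icc i)
  have hrj : StrictMono (r ∘ j) := Fin.strictMono_iff_lt_succ.2 fun k => by
    have h₁ := (hj k.castSucc).2
    have h₂ := (hj k.succ).1
    have h₃ := hgap k
    simp only [Function.comp]
    linarith
  exact ⟨j, fun a b hab => hr.1.lt_iff_lt.1 (hrj hab), hj⟩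

end IsPartition

/-- For a continuous curve of finite energy, the energy sums along partitions of small
mesh approximate the energy: for every `ε > 0` there is `δ > 0` such that every
partition of mesh `≤ δ` has energy sum `≥ E(γ) - ε`. -/
theorem stmt_7 {X : Type*} [MetricSpace X] (γ : ℝ → X)
    (hγ : ContinuousOn γ (Icc (0 : ℝ) 1)) (hE : energy γ ≠ ⊤) :
    ∀ ε > (0 : ℝ), ∃ δ > (0 : ℝ), ∀ (m : ℕ) (r : Fin (m + 2) → ℝ),
      IsPartition r → (∀ k : Fin (m + 1), r k.succ - r k.castSucc ≤ δ) →
      (energy γ).toReal - ε ≤ energySum γ r := by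
  intro ε hε
  rcases le_or_gt (energy γ).toReal ε with hsmall | hlarge
  · exact ⟨1, one_pos, fun m r hr _ => by linarith [energySum_nonneg γ hr.1.monotone]⟩
  obtain ⟨n, s, hs, hsE⟩ := exists_lt_energySum_of_ofReal_lt γ
    ((ENNReal.ofReal_lt_iff_lt_toReal (by linarith) hE).2 (by linarith :
      (energy γ).toReal - ε / 2 < (energy γ).toReal))
  obtain ⟨δ₁, hδ₁, hnear⟩ := Metric.continuousWithinAt_iff.1
    (energySum_continuousOn γ hγ n s ⟨hs.mem_Icc, hs.1⟩) (ε / 2) (half_pos hε)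
  obtain ⟨δ, ⟨hδδ₁, hgap⟩, hδ⟩ : ∃ δ : ℝ,
      (δ < δ₁ ∧ ∀ k : Fin (n + 1), δ < s k.succ - s k.castSucc) ∧ 0 < δ :=
    (((eventually_lt_nhds hδ₁).and (eventually_all.2 fun k =>
      eventually_lt_nhds (sub_pos.2 (hs.1 k.castSucc_lt_succ)))).filter_mono
      nhdsWithin_le_nhds |>.and (self_mem_nhdsWithin (s := Ioi 0))).exists
  refine ⟨δ, hδ, fun m r hr hmesh => ?_⟩
  obtain ⟨j, hj, hjs⟩ := hr.exists_strictMono_mem_Ioc hδ hmesh hs hgap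
  have hclose : dist (r ∘ j) s < δ₁ := (dist_pi_lt_iff hδ₁).2 fun i => by
    rw [Function.comp_apply, Real.dist_eq, abs_sub_lt_iff]
    constructor <;> linarith [(hjs i).1, (hjs i).2]
  have hsub := (abs_sub_lt_iff.1 (hnear (x := r ∘ j) ⟨fun i => hr.mem_Icc (j i), hr.1.comp hj⟩ hclose)).2
  linarith [energySum_comp_le γ hr.1 hj]
end

section
/- Let γ : [0,1] → X be a continuous curve in a metric space with finite energy E(γ). Then for every ε ∈ (0,1) and every h ∈ (0, ε], ∫_0^{1−ε} d(γ(t+h), γ(t))²/h² dt ≤ E(γ). -/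
/-!
For `t ∈ (0, h)` the points `t, t + h, t + 2h, …` that lie in `(0, 1 - ε)`, followed by one more
step of length `h` (still `< 1` since `h ≤ ε`), form a chain inside `(0, 1)`; completed by `0`
and `1` it is a partition, so `∑ᵢ d(γ(t + ih + h), γ(t + ih))² ≤ h E(γ)`. Integrating this over
`t ∈ (0, h)` reassembles `∫₀^{1-ε} d(γ(s + h), γ(s))² ds`, which is thus at most `h² E(γ)`.
-/

open Set MeasureTheory Filter
open scoped ENNReal

section Energy

variable {X : Type*} [MetricSpace X] {γ : ℝ → X}

lemma energySum_le_energy (hE : energy γ ≠ ⊤) {m : ℕ} {r : Fin (m + 2) → ℝ}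
    (hr : IsPartition r) : energySum γ r ≤ (energy γ).toReal :=
  (ENNReal.ofReal_le_iff_le_toReal hE).1 <|
    le_iSup_of_le m <| le_iSup_of_le r <| le_iSup_of_le hr le_rfl

lemma energySum_le_energy_of_strictMono (hE : energy γ ≠ ⊤) {m : ℕ} {s : Fin (m + 2) → ℝ}
    (hs : StrictMono s) (hs0 : 0 < s 0) (hs1 : s (Fin.last _) < 1) :
    energySum γ s ≤ (energy γ).toReal := by
  set r : Fin (m + 4) → ℝ := Fin.cons 0 (Fin.snoc s 1) with hr_def
  have hr : StrictMono r := by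
    rw [hr_def, ← Fin.insertNth_zero']
    refine Fin.strictMono_insertNth_zero ?_ _ (by simpa [Fin.snoc] using hs0)
    rw [← Fin.insertNth_last']
    exact Fin.strictMono_insertNth_last hs _ hs1
  have hsplit : energySum γ r = dist (γ 0) (γ (s 0)) ^ 2 / (s 0 - 0) + energySum γ s
      + dist (γ (s (Fin.last _))) (γ 1) ^ 2 / (1 - s (Fin.last _)) := by
    rw [energySum, Fin.sum_univ_succ, Fin.sum_univ_castSucc]
    simp only [r, ← Fin.succ_castSucc, Fin.cons_succ, Fin.castSucc_zero, Fin.cons_zero]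
    simp only [Fin.succ_castSucc, Fin.snoc_castSucc, Fin.succ_last, Fin.snoc_last, energySum]
    exact (add_assoc _ _ _).symm
  have hfirst : 0 ≤ dist (γ 0) (γ (s 0)) ^ 2 / (s 0 - 0) := by positivity
  have hlast : 0 ≤ dist (γ (s (Fin.last _))) (γ 1) ^ 2 / (1 - s (Fin.last _)) :=
    div_nonneg (sq_nonneg _) (by linarith)
  have := energySum_le_energy hE (r := r) ⟨hr, rfl, by simp [r]⟩
  linarith

lemma sum_range_dist_sq_le_mul_energy (hE : energy γ ≠ ⊤) {t h : ℝ} (ht : 0 < t) (hh : 0 < h)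
    {M : ℕ} (hM : t + M * h < 1) :
    ∑ i ∈ Finset.range M, dist (γ (t + i * h + h)) (γ (t + i * h)) ^ 2
      ≤ h * (energy γ).toReal := by
  obtain _ | m := M
  · simpa using mul_nonneg hh.le ENNReal.toReal_nonneg
  set s : Fin (m + 2) → ℝ := fun k ↦ t + k * h with hs_def
  have hs : StrictMono s := fun i j hij ↦ by
    have : (i : ℝ) < j := by exact_mod_cast hij
    simp only [hs_def]
    nlinarith
  have hchain : energySum γ s
      = (∑ i ∈ Finset.range (m + 1), dist (γ (t + i * h + h)) (γ (t + i * h)) ^ 2) / h := by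
    rw [Finset.sum_div, ← Fin.sum_univ_eq_sum_range
      (fun i ↦ dist (γ (t + i * h + h)) (γ (t + i * h)) ^ 2 / h)]
    refine Finset.sum_congr rfl fun k _ ↦ ?_
    simp only [hs_def, Fin.val_castSucc, Fin.val_succ, Nat.cast_succ]
    rw [dist_comm, add_one_mul, ← add_assoc, add_sub_cancel_left]
  have := energySum_le_energy_of_strictMono hE hs (by simpa [hs_def] using ht)
    (by simpa [hs_def] using hM)
  rwa [hchain, div_le_iff₀ hh, mul_comm] at this

lemma sum_indicator_dist_sq_le_mul_energy (hE : energy γ ≠ ⊤) {L h t : ℝ} (hh : 0 < h)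
    (hLh : L + h ≤ 1) (ht : t ∈ Ioo 0 1) (N : ℕ) :
    ∑ i ∈ Finset.range N, (Ioo 0 L).indicator (fun s ↦ dist (γ (s + h)) (γ s) ^ 2) (t + i * h)
      ≤ h * (energy γ).toReal := by
  -- the shifts `t + i * h` lying in `(0, L)` are exactly those with `i < M`
  set M := ⌈(L - t) / h⌉₊
  have hM : ∀ i : ℕ, i < M ↔ t + i * h < L := fun i ↦ by
    rw [Nat.lt_ceil, lt_div_iff₀ hh]
    constructor <;> intro <;> linarith
  have hMh : t + M * h < 1 := by
    rcases le_or_gt L t with hLt | htL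
    · rw [show M = 0 from Nat.ceil_eq_zero.2 (div_nonpos_of_nonpos_of_nonneg (by linarith) hh.le)]
      simpa using ht.2
    · have := Nat.ceil_lt_add_one (div_pos (sub_pos.2 htL) hh).le
      rw [← sub_lt_iff_lt_add, lt_div_iff₀ hh] at this
      linarith
  calc ∑ i ∈ Finset.range N, (Ioo 0 L).indicator (fun s ↦ dist (γ (s + h)) (γ s) ^ 2) (t + i * h)
      ≤ ∑ i ∈ Finset.range (max N M),
          (Ioo 0 L).indicator (fun s ↦ dist (γ (s + h)) (γ s) ^ 2) (t + i * h) :=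
        Finset.sum_le_sum_of_subset_of_nonneg (Finset.range_subset_range.2 (le_max_left _ _))
          fun _ _ _ ↦ indicator_nonneg (fun _ _ ↦ sq_nonneg _) _
    _ = ∑ i ∈ Finset.range M,
          (Ioo 0 L).indicator (fun s ↦ dist (γ (s + h)) (γ s) ^ 2) (t + i * h) := by
        refine (Finset.sum_subset (Finset.range_subset_range.2 (le_max_right _ _))
          fun i _ hi ↦ indicator_of_notMem (fun hmem ↦ hi ?_) _).symm
        exact Finset.mem_range.2 ((hM i).2 hmem.2)
    _ = ∑ i ∈ Finset.range M, dist (γ (t + i * h + h)) (γ (t + i * h)) ^ 2 := by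
        refine Finset.sum_congr rfl fun i hi ↦ indicator_of_mem ?_ _
        exact ⟨by have := ht.1; positivity, (hM i).1 (Finset.mem_range.1 hi)⟩
    _ ≤ h * (energy γ).toReal := sum_range_dist_sq_le_mul_energy hE ht.1 hh hMh

end Energy

section ShiftedSums

variable {E : Type*} [NormedAddCommGroup E] [NormedSpace ℝ E] {f : ℝ → E}

lemma integral_sum_comp_add_nat_mul (hf : Integrable f) (h : ℝ) (N : ℕ) :
    ∫ t in (0 : ℝ)..h, ∑ i ∈ Finset.range N, f (t + i * h) = ∫ t in (0 : ℝ)..N * h, f t := by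
  rw [intervalIntegral.integral_finsetSum fun i _ ↦ (hf.comp_add_right _).intervalIntegrable]
  have := intervalIntegral.sum_integral_adjacent_intervals (a := fun i : ℕ ↦ i * h) (n := N)
    (fun _ _ ↦ hf.intervalIntegrable)
  simp only [Nat.cast_zero, zero_mul, Nat.cast_succ, add_one_mul] at this
  simp_rw [intervalIntegral.integral_comp_add_right, zero_add, add_comm h]
  exact this

lemma integral_indicator_Ioo_of_le {a b c : ℝ} (hab : a ≤ b) (hbc : b ≤ c) :
    ∫ t in a..c, (Ioo a b).indicator f t = ∫ t in a..b, f t := by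
  rw [intervalIntegral.integral_of_le (hab.trans hbc), intervalIntegral.integral_of_le hab,
    setIntegral_indicator measurableSet_Ioo, integral_Ioc_eq_integral_Ioo,
    inter_eq_right.2 (Ioo_subset_Ioc_self.trans (Ioc_subset_Ioc_right hbc))]

end ShiftedSums

/-- For a continuous curve of finite energy, for every `ε ∈ (0,1)` and `h ∈ (0, ε]`,
`∫_0^{1-ε} d(γ(t+h), γ(t))²/h² dt ≤ E(γ)`. -/
theorem stmt_9 {X : Type*} [MetricSpace X] (γ : ℝ → X)
    (hγ : ContinuousOn γ (Icc (0 : ℝ) 1)) (hE : energy γ ≠ ⊤) :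
    ∀ ε : ℝ, 0 < ε → ε < 1 → ∀ h : ℝ, 0 < h → h ≤ ε →
      ∫ t in (0 : ℝ)..(1 - ε), dist (γ (t + h)) (γ t) ^ 2 / h ^ 2 ≤ (energy γ).toReal := by
  intro ε _ hε1 h hh hhε
  set F : ℝ → ℝ := fun s ↦ dist (γ (s + h)) (γ s) ^ 2
  have hF : ContinuousOn F (Icc 0 (1 - ε)) := by
    have hmaps : MapsTo (· + h) (Icc 0 (1 - ε)) (Icc 0 1) := fun s hs ↦
      ⟨by linarith [hs.1], by linarith [hs.2]⟩
    exact (continuous_dist.comp_continuousOn <|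
      (hγ.comp (continuous_add_const h).continuousOn hmaps).prodMk
        (hγ.mono (Icc_subset_Icc_right (by linarith)))).pow 2
  have hFi : Integrable ((Ioo 0 (1 - ε)).indicator F) :=
    (hF.integrableOn_Icc.mono_set Ioo_subset_Icc_self).integrable_indicator measurableSet_Ioo
  obtain ⟨N, hN⟩ := exists_nat_ge ((1 - ε) / h)
  rw [intervalIntegral.integral_div, div_le_iff₀ (by positivity)]
  calc ∫ t in (0 : ℝ)..(1 - ε), F t
      = ∫ t in (0 : ℝ)..N * h, (Ioo 0 (1 - ε)).indicator F t :=
        (integral_indicator_Ioo_of_le (by linarith) ((div_le_iff₀ hh).1 hN)).symm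
    _ = ∫ t in (0 : ℝ)..h, ∑ i ∈ Finset.range N, (Ioo 0 (1 - ε)).indicator F (t + i * h) :=
        (integral_sum_comp_add_nat_mul hFi h N).symm
    _ ≤ ∫ _ in (0 : ℝ)..h, h * (energy γ).toReal :=
        intervalIntegral.integral_mono_on_of_le_Ioo hh.le
          (integrable_finsetSum _ fun _ _ ↦ hFi.comp_add_right _).intervalIntegrable
          intervalIntegrable_const fun t ht ↦
            sum_indicator_dist_sq_le_mul_energy hE hh (by linarith) ⟨ht.1, by linarith [ht.2]⟩ N
    _ = (energy γ).toReal * h ^ 2 := by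
        rw [intervalIntegral.integral_const, smul_eq_mul]
        ring
end

section
/- For μ, ν ∈ P₂(ℝ), the quantile coupling Q(μ,ν), defined as the joint law of (F_μ^{-1}(U), F_ν^{-1}(U)) for U uniform on [0,1], satisfies ∫ |y − x|² dQ(μ,ν)(x,y) ≤ ∫ |y − x|² dP(x,y) for every coupling P of μ and ν; i.e. the quantile coupling is an optimal transport plan for the quadratic cost. -/
open Set MeasureTheory Filter
open scoped ENNReal

/-- The cumulative distribution function of a measure on ℝ. -/
noncomputable def cdf (μ : MeasureTheory.Measure ℝ) (x : ℝ) : ℝ := (μ (Set.Iic x)).toReal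

/-- The quantile function (generalized inverse of the cdf) of a measure on ℝ. -/
noncomputable def qf (μ : MeasureTheory.Measure ℝ) (u : ℝ) : ℝ := sInf {x : ℝ | u ≤ cdf μ x}

/-- The quantile coupling of two measures on ℝ: the joint law of
`(F_μ⁻¹(U), F_ν⁻¹(U))` for `U` uniform on `(0,1)`. -/
noncomputable def quantileCoupling (μ ν : MeasureTheory.Measure ℝ) :
    MeasureTheory.Measure (ℝ × ℝ) :=
  ((MeasureTheory.volume : MeasureTheory.Measure ℝ).restrict (Set.Ioo 0 1)).map
    (fun u => (qf μ u, qf ν u))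

/-!
Since `(y - x)² = x² + y² - 2 x y` and the marginal terms are the same for every coupling, it
suffices that the quantile coupling `Q` maximises `∫ x y`. By Hoeffding's identity
`x y = ∫∫ (1_{s<x} - 1_{s<0}) (1_{t<y} - 1_{t<0}) ds dt` and Fubini, `∫ x y dP` is, up to terms
depending only on the marginals, `∫∫ P((s,∞) × (t,∞)) ds dt`. Every coupling satisfies the
Fréchet–Hoeffding bound `P((s,∞) × (t,∞)) ≤ min (μ (s,∞)) (ν (t,∞))`, and `Q` attains it because
`x < F_μ⁻¹(u) ↔ F_μ(x) < u` for `u ∈ (0,1)`.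
-/

open scoped Topology

section Quantile

lemma monotone_cdf {μ : Measure ℝ} [IsFiniteMeasure μ] : Monotone (cdf μ) := fun _ _ h =>
  ENNReal.toReal_mono (measure_ne_top _ _) (measure_mono (Iic_subset_Iic.2 h))

variable {μ : Measure ℝ} [IsProbabilityMeasure μ] {u x : ℝ}

lemma cdf_eq_probabilityTheory_cdf : cdf μ = ProbabilityTheory.cdf μ :=
  funext fun x => (ProbabilityTheory.cdf_eq_real μ x).symm

lemma nonempty_setOf_le_cdf (hu : u < 1) : {x | u ≤ cdf μ x}.Nonempty := by
  rw [cdf_eq_probabilityTheory_cdf]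
  exact ((ProbabilityTheory.tendsto_cdf_atTop μ).eventually (eventually_ge_nhds hu)).exists

lemma bddBelow_setOf_le_cdf (hu : 0 < u) : BddBelow {x | u ≤ cdf μ x} := by
  obtain ⟨z, hz⟩ :=
    ((ProbabilityTheory.tendsto_cdf_atBot μ).eventually (eventually_lt_nhds hu)).exists
  refine ⟨z, fun x hx => le_of_not_gt fun hxz => ?_⟩
  have : cdf μ x ≤ cdf μ z := monotone_cdf hxz.le
  rw [cdf_eq_probabilityTheory_cdf] at this hx
  exact (hx.trans this).not_gt hz

lemma qf_le_iff (hu : u ∈ Ioo 0 1) : qf μ u ≤ x ↔ u ≤ cdf μ x := by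
  refine ⟨fun h => le_trans ?_ (monotone_cdf h), fun h => csInf_le (bddBelow_setOf_le_cdf hu.1) h⟩
  have hright : ∀ y, qf μ u < y → u ≤ cdf μ y := fun y hy => by
    obtain ⟨x, hx, hxy⟩ :=
      (csInf_lt_iff (bddBelow_setOf_le_cdf hu.1) (nonempty_setOf_le_cdf hu.2)).1 hy
    exact hx.trans (monotone_cdf hxy.le)
  have hcont : Tendsto (cdf μ) (𝓝[>] qf μ u) (𝓝 (cdf μ (qf μ u))) := by
    rw [cdf_eq_probabilityTheory_cdf]
    exact ((ProbabilityTheory.cdf μ).right_continuous _).mono_left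
      (nhdsWithin_mono _ Ioi_subset_Ici_self)
  exact ge_of_tendsto hcont (eventually_nhdsWithin_of_forall hright)

lemma lt_qf_iff (hu : u ∈ Ioo 0 1) : x < qf μ u ↔ cdf μ x < u := by
  simpa only [not_le] using (qf_le_iff hu).not

lemma monotoneOn_qf : MonotoneOn (qf μ) (Ioo 0 1) := fun _ hu _ hv huv =>
  csInf_le_csInf (bddBelow_setOf_le_cdf hu.1) (nonempty_setOf_le_cdf hv.2)
    fun _ hx => huv.trans hx

lemma aemeasurable_qf : AEMeasurable (qf μ) ((volume : Measure ℝ).restrict (Ioo 0 1)) :=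
  aemeasurable_restrict_of_monotoneOn measurableSet_Ioo monotoneOn_qf

lemma preimage_qf_Ioi_inter_Ioo : qf μ ⁻¹' Ioi x ∩ Ioo 0 1 = Ioo (cdf μ x) 1 := by
  ext u
  simp only [mem_inter_iff, mem_preimage, mem_Ioi, mem_Ioo]
  constructor
  · rintro ⟨hx, hu⟩
    exact ⟨(lt_qf_iff hu).1 hx, hu.2⟩
  · rintro ⟨hx, hu⟩
    have hu' : u ∈ Ioo 0 1 := ⟨ENNReal.toReal_nonneg.trans_lt hx, hu⟩
    exact ⟨(lt_qf_iff hu').2 hx, hu'⟩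

lemma measure_Ioi_eq_ofReal_one_sub_cdf : μ (Ioi x) = ENNReal.ofReal (1 - cdf μ x) := by
  rw [← compl_Iic, prob_compl_eq_one_sub measurableSet_Iic,
    ENNReal.ofReal_sub (q := cdf μ x) _ ENNReal.toReal_nonneg, ENNReal.ofReal_one, cdf,
    ENNReal.ofReal_toReal (measure_ne_top _ _)]

lemma volume_restrict_preimage_qf_Ioi :
    (volume : Measure ℝ).restrict (Ioo 0 1) (qf μ ⁻¹' Ioi x) = μ (Ioi x) := by
  rw [Measure.restrict_apply' measurableSet_Ioo, preimage_qf_Ioi_inter_Ioo, Real.volume_Ioo,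
    measure_Ioi_eq_ofReal_one_sub_cdf]

instance isProbabilityMeasure_volume_restrict_Ioo_zero_one :
    IsProbabilityMeasure (volume.restrict (Ioo (0 : ℝ) 1)) :=
  ⟨by simp [Real.volume_Ioo]⟩

theorem map_qf : ((volume : Measure ℝ).restrict (Ioo 0 1)).map (qf μ) = μ := by
  have : IsProbabilityMeasure (((volume : Measure ℝ).restrict (Ioo 0 1)).map (qf μ)) :=
    Measure.isProbabilityMeasure_map aemeasurable_qf
  refine Measure.ext_of_Iic _ _ fun x => ?_
  rw [← compl_Ioi, prob_compl_eq_one_sub measurableSet_Ioi,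
    prob_compl_eq_one_sub measurableSet_Ioi,
    Measure.map_apply_of_aemeasurable aemeasurable_qf measurableSet_Ioi,
    volume_restrict_preimage_qf_Ioi]

end Quantile

structure IsCoupling {α β : Type*} [MeasurableSpace α] [MeasurableSpace β]
    (P : Measure (α × β)) (μ : Measure α) (ν : Measure β) : Prop where
  map_fst : P.map Prod.fst = μ
  map_snd : P.map Prod.snd = ν

namespace IsCoupling

variable {α β : Type*} [MeasurableSpace α] [MeasurableSpace β]
  {P : Measure (α × β)} {μ : Measure α} {ν : Measure β}
  {E : Type*} [NormedAddCommGroup E]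

lemma isProbabilityMeasure [IsProbabilityMeasure μ] (hP : IsCoupling P μ ν) :
    IsProbabilityMeasure P := by
  rw [← Measure.isProbabilityMeasure_map_iff measurable_fst.aemeasurable, hP.map_fst]
  infer_instance

lemma measure_fst_preimage (hP : IsCoupling P μ ν) {A : Set α} (hA : MeasurableSet A) :
    P (Prod.fst ⁻¹' A) = μ A := by
  rw [← hP.map_fst, Measure.map_apply measurable_fst hA]

lemma measure_snd_preimage (hP : IsCoupling P μ ν) {B : Set β} (hB : MeasurableSet B) :
    P (Prod.snd ⁻¹' B) = ν B := by
  rw [← hP.map_snd, Measure.map_apply measurable_snd hB]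

lemma measure_prod_le_min (hP : IsCoupling P μ ν) {A : Set α} {B : Set β} (hA : MeasurableSet A)
    (hB : MeasurableSet B) : P (A ×ˢ B) ≤ min (μ A) (ν B) := by
  rw [← hP.measure_fst_preimage hA, ← hP.measure_snd_preimage hB]
  exact le_min (measure_mono fun _ h => h.1) (measure_mono fun _ h => h.2)

lemma memLp_comp_fst {f : α → E} {p : ℝ≥0∞}
    (hP : IsCoupling P μ ν) (hf : MemLp f p μ) : MemLp (fun z => f z.1) p P :=
  (hP.map_fst ▸ hf).comp_of_map measurable_fst.aemeasurable

lemma memLp_comp_snd {g : β → E} {p : ℝ≥0∞}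
    (hP : IsCoupling P μ ν) (hg : MemLp g p ν) : MemLp (fun z => g z.2) p P :=
  (hP.map_snd ▸ hg).comp_of_map measurable_snd.aemeasurable

lemma integrable_comp_fst (hP : IsCoupling P μ ν) {f : α → E} (hf : Integrable f μ) :
    Integrable (fun z => f z.1) P :=
  (hP.map_fst ▸ hf).comp_measurable measurable_fst

lemma integrable_comp_snd (hP : IsCoupling P μ ν) {g : β → E} (hg : Integrable g ν) :
    Integrable (fun z => g z.2) P :=
  (hP.map_snd ▸ hg).comp_measurable measurable_snd

lemma integral_comp_fst [NormedSpace ℝ E] (hP : IsCoupling P μ ν) {f : α → E}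
    (hf : AEStronglyMeasurable f μ) :
    ∫ z, f z.1 ∂P = ∫ x, f x ∂μ := by
  rw [← hP.map_fst] at hf ⊢
  exact (integral_map measurable_fst.aemeasurable hf).symm

lemma integral_comp_snd [NormedSpace ℝ E] (hP : IsCoupling P μ ν) {g : β → E}
    (hg : AEStronglyMeasurable g ν) :
    ∫ z, g z.2 ∂P = ∫ y, g y ∂ν := by
  rw [← hP.map_snd] at hg ⊢
  exact (integral_map measurable_snd.aemeasurable hg).symm

end IsCoupling

namespace IsCoupling

variable {P : Measure (ℝ × ℝ)} {μ ν : Measure ℝ}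

lemma integrable_fst_mul_snd (hP : IsCoupling P μ ν) (hμ : MemLp id 2 μ) (hν : MemLp id 2 ν) :
    Integrable (fun p : ℝ × ℝ => p.1 * p.2) P :=
  (hP.memLp_comp_fst hμ).integrable_mul (hP.memLp_comp_snd hν)

lemma integral_sq_sub (hP : IsCoupling P μ ν) (hμ : MemLp id 2 μ) (hν : MemLp id 2 ν) :
    ∫ p, (p.2 - p.1) ^ 2 ∂P = ∫ x, x ^ 2 ∂μ + ∫ y, y ^ 2 ∂ν - 2 * ∫ p, p.1 * p.2 ∂P := by
  have hsq : Measurable fun x : ℝ => x ^ 2 := measurable_id.pow_const 2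
  have hfst : Integrable (fun p : ℝ × ℝ => p.1 ^ 2) P := (hP.memLp_comp_fst hμ).integrable_sq
  have hsnd : Integrable (fun p : ℝ × ℝ => p.2 ^ 2) P := (hP.memLp_comp_snd hν).integrable_sq
  have hmul := (hP.integrable_fst_mul_snd hμ hν).const_mul 2
  calc ∫ p, (p.2 - p.1) ^ 2 ∂P = ∫ p, (p.1 ^ 2 + p.2 ^ 2 - 2 * (p.1 * p.2)) ∂P :=
        integral_congr_ae (Eventually.of_forall fun p => by ring)
    _ = ∫ p, p.1 ^ 2 ∂P + ∫ p, p.2 ^ 2 ∂P - 2 * ∫ p, p.1 * p.2 ∂P := by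
        rw [integral_sub (f := fun p : ℝ × ℝ => p.1 ^ 2 + p.2 ^ 2) (hfst.add hsnd) hmul,
          integral_add hfst hsnd, integral_const_mul]
    _ = ∫ x, x ^ 2 ∂μ + ∫ y, y ^ 2 ∂ν - 2 * ∫ p, p.1 * p.2 ∂P := by
        rw [hP.integral_comp_fst hsq.aestronglyMeasurable,
          hP.integral_comp_snd hsq.aestronglyMeasurable]

lemma lintegral_sq_sub (hP : IsCoupling P μ ν) (hμ : MemLp id 2 μ) (hν : MemLp id 2 ν) :
    ∫⁻ p, ENNReal.ofReal ((p.2 - p.1) ^ 2) ∂P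
      = ENNReal.ofReal (∫ x, x ^ 2 ∂μ + ∫ y, y ^ 2 ∂ν - 2 * ∫ p, p.1 * p.2 ∂P) := by
  have hsq : Integrable (fun p : ℝ × ℝ => (p.2 - p.1) ^ 2) P :=
    ((hP.memLp_comp_snd hν).sub (hP.memLp_comp_fst hμ)).integrable_sq
  rw [← hP.integral_sq_sub hμ hν,
    ofReal_integral_eq_lintegral_ofReal hsq (Eventually.of_forall fun _ => sq_nonneg _)]

end IsCoupling

section QuantileCoupling

variable {μ ν : Measure ℝ} [IsProbabilityMeasure μ] [IsProbabilityMeasure ν]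

lemma aemeasurable_qf_prodMk_qf :
    AEMeasurable (fun u => (qf μ u, qf ν u)) ((volume : Measure ℝ).restrict (Ioo 0 1)) :=
  aemeasurable_qf.prodMk aemeasurable_qf

variable (μ ν) in
theorem isCoupling_quantileCoupling : IsCoupling (quantileCoupling μ ν) μ ν where
  map_fst := by
    rw [quantileCoupling, AEMeasurable.map_map_of_aemeasurable measurable_fst.aemeasurable
      aemeasurable_qf_prodMk_qf]
    exact map_qf
  map_snd := by
    rw [quantileCoupling, AEMeasurable.map_map_of_aemeasurable measurable_snd.aemeasurable
      aemeasurable_qf_prodMk_qf]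
    exact map_qf

theorem quantileCoupling_Ioi_prod_Ioi (s t : ℝ) :
    quantileCoupling μ ν (Ioi s ×ˢ Ioi t) = min (μ (Ioi s)) (ν (Ioi t)) := by
  rw [quantileCoupling, Measure.map_apply_of_aemeasurable aemeasurable_qf_prodMk_qf
      (measurableSet_Ioi.prod measurableSet_Ioi), mk_preimage_prod,
    Measure.restrict_apply' measurableSet_Ioo, inter_inter_distrib_right,
    preimage_qf_Ioi_inter_Ioo, preimage_qf_Ioi_inter_Ioo, Ioo_inter_Ioo, inf_idem,
    Real.volume_Ioo, ← min_sub_sub_left, ENNReal.ofReal_min,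
    measure_Ioi_eq_ofReal_one_sub_cdf, measure_Ioi_eq_ofReal_one_sub_cdf]

end QuantileCoupling

section Hoeffding

noncomputable def layer (s x : ℝ) : ℝ :=
  (Ioi s).indicator 1 x - (Ioi s).indicator 1 0

lemma measurable_layer : Measurable fun q : ℝ × ℝ => layer q.1 q.2 := by
  have h : ∀ f : ℝ × ℝ → ℝ, Measurable f →
      Measurable fun q : ℝ × ℝ => (Ioi q.1).indicator (1 : ℝ → ℝ) (f q) := fun f hf => by
    simp only [indicator_apply, mem_Ioi]
    exact Measurable.ite (measurableSet_lt measurable_fst hf) measurable_const measurable_const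
  exact (h _ measurable_snd).sub (h _ measurable_const)

lemma layer_of_nonneg {x : ℝ} (hx : 0 ≤ x) : (fun s => layer s x) = (Ico 0 x).indicator 1 := by
  ext s
  simp only [layer, indicator_apply, mem_Ioi, mem_Ico, Pi.one_apply]
  split_ifs <;> grind

lemma layer_of_neg {x : ℝ} (hx : x < 0) :
    (fun s => layer s x) = fun s => -(Ico x 0).indicator 1 s := by
  ext s
  simp only [layer, indicator_apply, mem_Ioi, mem_Ico, Pi.one_apply]
  split_ifs <;> grind

lemma integral_layer (x : ℝ) : ∫ s, layer s x = x := by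
  rcases le_or_gt 0 x with hx | hx
  · rw [layer_of_nonneg hx, integral_indicator_one measurableSet_Ico,
      Real.volume_real_Ico_of_le hx, sub_zero]
  · rw [layer_of_neg hx, integral_neg, integral_indicator_one measurableSet_Ico,
      Real.volume_real_Ico_of_le hx.le, zero_sub, neg_neg]

lemma lintegral_enorm_layer_le (x : ℝ) : ∫⁻ s, ‖layer s x‖ₑ ≤ ENNReal.ofReal |x| := by
  have hle : ∀ s, ‖layer s x‖ₑ ≤ (uIcc 0 x).indicator 1 s := fun s => by
    rcases le_or_gt 0 x with hx | hx
    · rw [show layer s x = _ from congrFun (layer_of_nonneg hx) s, uIcc_of_le hx]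
      by_cases hs : s ∈ Ico 0 x
      · simp [hs, Ico_subset_Icc_self hs]
      · simp [hs]
    · rw [show layer s x = _ from congrFun (layer_of_neg hx) s, uIcc_of_ge hx.le]
      by_cases hs : s ∈ Ico x 0
      · simp [hs, Ico_subset_Icc_self hs]
      · simp [hs]
  calc ∫⁻ s, ‖layer s x‖ₑ ≤ ∫⁻ s, (uIcc 0 x).indicator 1 s := lintegral_mono hle
    _ = ENNReal.ofReal |x| := by
      rw [lintegral_indicator_one measurableSet_uIcc, Real.volume_interval, sub_zero]

lemma layer_mul_layer (s t x y : ℝ) :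
    layer s x * layer t y = (Ioi s ×ˢ Ioi t).indicator 1 (x, y)
      - ((Ioi s).indicator 1 0 * (Ioi t).indicator 1 0 + (Ioi s).indicator 1 0 * layer t y
        + (Ioi t).indicator 1 0 * layer s x) := by
  simp only [layer, indicator_apply, mem_Ioi, mem_prod, Pi.one_apply]
  split_ifs <;> grind

lemma integrable_layer {μ : Measure ℝ} [IsFiniteMeasure μ] (s : ℝ) :
    Integrable (layer s) μ :=
  ((integrable_const (1 : ℝ)).indicator measurableSet_Ioi).sub (integrable_const _)

variable {P : Measure (ℝ × ℝ)}

lemma integrable_layer_mul_layer [SFinite P] (h : Integrable (fun p : ℝ × ℝ => p.1 * p.2) P) :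
    Integrable (fun z : (ℝ × ℝ) × (ℝ × ℝ) => layer z.2.1 z.1.1 * layer z.2.2 z.1.2)
      (P.prod (volume.prod volume)) := by
  have hmeas : Measurable fun z : (ℝ × ℝ) × (ℝ × ℝ) => layer z.2.1 z.1.1 * layer z.2.2 z.1.2 :=
    (measurable_layer.comp (measurable_snd.fst.prodMk measurable_fst.fst)).mul
      (measurable_layer.comp (measurable_snd.snd.prodMk measurable_fst.snd))
  have hslice : ∀ x : ℝ, Measurable fun s => ‖layer s x‖ₑ := fun x =>
    (measurable_layer.comp (measurable_id.prodMk measurable_const)).enorm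
  refine ⟨hmeas.aestronglyMeasurable, ?_⟩
  calc ∫⁻ z, ‖layer z.2.1 z.1.1 * layer z.2.2 z.1.2‖ₑ ∂P.prod (volume.prod volume)
      = ∫⁻ p, (∫⁻ s, ‖layer s p.1‖ₑ) * (∫⁻ t, ‖layer t p.2‖ₑ) ∂P := by
        rw [lintegral_prod _ hmeas.enorm.aemeasurable]
        refine lintegral_congr fun p => ?_
        simp only [enorm_mul]
        exact lintegral_prod_mul (hslice p.1).aemeasurable (hslice p.2).aemeasurable
    _ ≤ ∫⁻ p, ‖p.1 * p.2‖ₑ ∂P := by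
        refine lintegral_mono fun p => ?_
        rw [enorm_mul, Real.enorm_eq_ofReal_abs, Real.enorm_eq_ofReal_abs]
        exact mul_le_mul' (lintegral_enorm_layer_le p.1) (lintegral_enorm_layer_le p.2)
    _ < ⊤ := h.hasFiniteIntegral

theorem integral_fst_mul_snd_eq_integral_layer_mul_layer [SFinite P]
    (h : Integrable (fun p : ℝ × ℝ => p.1 * p.2) P) :
    ∫ p, p.1 * p.2 ∂P
      = ∫ q, ∫ p, layer q.1 p.1 * layer q.2 p.2 ∂P ∂(volume.prod volume) := by
  calc ∫ p, p.1 * p.2 ∂P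
      = ∫ p, ∫ q, layer q.1 p.1 * layer q.2 p.2 ∂(volume.prod volume) ∂P := by
        refine integral_congr_ae (Eventually.of_forall fun p => ?_)
        dsimp only
        rw [integral_prod_mul (fun s => layer s p.1) (fun t => layer t p.2),
          integral_layer, integral_layer]
    _ = _ := integral_integral_swap (integrable_layer_mul_layer h)

end Hoeffding

namespace IsCoupling

variable {P P' : Measure (ℝ × ℝ)} {μ ν : Measure ℝ} [IsProbabilityMeasure μ]
  [IsProbabilityMeasure ν]

lemma integral_layer_mul_layer (hP : IsCoupling P μ ν) (s t : ℝ) :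
    ∫ p, layer s p.1 * layer t p.2 ∂P = P.real (Ioi s ×ˢ Ioi t)
      - ((Ioi s).indicator 1 0 * (Ioi t).indicator 1 0
        + (Ioi s).indicator 1 0 * ∫ y, layer t y ∂ν
        + (Ioi t).indicator 1 0 * ∫ x, layer s x ∂μ) := by
  have := hP.isProbabilityMeasure
  set a : ℝ := (Ioi s).indicator 1 0
  set b : ℝ := (Ioi t).indicator 1 0
  have hrect : Integrable ((Ioi s ×ˢ Ioi t).indicator (1 : ℝ × ℝ → ℝ)) P :=
    (integrable_const 1).indicator (measurableSet_Ioi.prod measurableSet_Ioi)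
  have hsnd : Integrable (fun p : ℝ × ℝ => a * layer t p.2) P :=
    (hP.integrable_comp_snd (integrable_layer t)).const_mul a
  have hfst : Integrable (fun p : ℝ × ℝ => b * layer s p.1) P :=
    (hP.integrable_comp_fst (integrable_layer s)).const_mul b
  have hconst : Integrable (fun p : ℝ × ℝ => a * b + a * layer t p.2) P :=
    (integrable_const _).add hsnd
  rw [show (fun p : ℝ × ℝ => layer s p.1 * layer t p.2)
      = fun p => (Ioi s ×ˢ Ioi t).indicator 1 p - (a * b + a * layer t p.2 + b * layer s p.1) from
    funext fun p => layer_mul_layer s t p.1 p.2,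
    integral_sub (g := fun p => a * b + a * layer t p.2 + b * layer s p.1) hrect
      (hconst.add hfst),
    integral_add hconst hfst,
    integral_add (integrable_const _) hsnd,
    integral_indicator_one (measurableSet_Ioi.prod measurableSet_Ioi),
    integral_const, probReal_univ, one_smul, integral_const_mul, integral_const_mul,
    hP.integral_comp_fst (integrable_layer s).aestronglyMeasurable,
    hP.integral_comp_snd (integrable_layer t).aestronglyMeasurable]


theorem integral_fst_mul_snd_le_of_measure_Ioi_prod_Ioi_le (hP : IsCoupling P μ ν)
    (hP' : IsCoupling P' μ ν) (hi : Integrable (fun p : ℝ × ℝ => p.1 * p.2) P)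
    (hi' : Integrable (fun p : ℝ × ℝ => p.1 * p.2) P')
    (h : ∀ s t, P (Ioi s ×ˢ Ioi t) ≤ P' (Ioi s ×ˢ Ioi t)) :
    ∫ p, p.1 * p.2 ∂P ≤ ∫ p, p.1 * p.2 ∂P' := by
  have := hP.isProbabilityMeasure
  have := hP'.isProbabilityMeasure
  rw [integral_fst_mul_snd_eq_integral_layer_mul_layer hi,
    integral_fst_mul_snd_eq_integral_layer_mul_layer hi']
  refine integral_mono (integrable_layer_mul_layer hi).integral_prod_right
    (integrable_layer_mul_layer hi').integral_prod_right fun q => ?_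
  rw [hP.integral_layer_mul_layer, hP'.integral_layer_mul_layer]
  gcongr
  exact ENNReal.toReal_mono (measure_ne_top _ _) (h q.1 q.2)

theorem integral_fst_mul_snd_le_quantileCoupling (hP : IsCoupling P μ ν) (hμ : MemLp id 2 μ)
    (hν : MemLp id 2 ν) : ∫ p, p.1 * p.2 ∂P ≤ ∫ p, p.1 * p.2 ∂(quantileCoupling μ ν) :=
  hP.integral_fst_mul_snd_le_of_measure_Ioi_prod_Ioi_le (isCoupling_quantileCoupling μ ν)
    (hP.integrable_fst_mul_snd hμ hν)
    ((isCoupling_quantileCoupling μ ν).integrable_fst_mul_snd hμ hν) fun s t =>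
      (hP.measure_prod_le_min measurableSet_Ioi measurableSet_Ioi).trans_eq
        (quantileCoupling_Ioi_prod_Ioi s t).symm

end IsCoupling

lemma memLp_id_two_of_lintegral_sq_ne_top {μ : Measure ℝ}
    (h : ∫⁻ x, ENNReal.ofReal (x ^ 2) ∂μ ≠ ⊤) : MemLp id 2 μ :=
  (memLp_two_iff_integrable_sq aestronglyMeasurable_id).2 <|
    (lintegral_ofReal_ne_top_iff_integrable (measurable_id.pow_const 2).aestronglyMeasurable
      (Eventually.of_forall fun x => sq_nonneg x)).1 h

/-- For `μ, ν ∈ P₂(ℝ)`, the quantile coupling minimizes the quadratic cost among all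
couplings of `μ` and `ν`: it is an optimal transport plan. -/
theorem stmt_15 (μ ν : Measure ℝ) [IsProbabilityMeasure μ] [IsProbabilityMeasure ν]
    (hμ2 : ∫⁻ x, ENNReal.ofReal (x ^ 2) ∂μ ≠ ⊤)
    (hν2 : ∫⁻ x, ENNReal.ofReal (x ^ 2) ∂ν ≠ ⊤)
    (P : Measure (ℝ × ℝ)) (hP : P.map Prod.fst = μ ∧ P.map Prod.snd = ν) :
    ∫⁻ p, ENNReal.ofReal ((p.2 - p.1) ^ 2) ∂(quantileCoupling μ ν)
      ≤ ∫⁻ p, ENNReal.ofReal ((p.2 - p.1) ^ 2) ∂P := by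
  have hcoupling : IsCoupling P μ ν := ⟨hP.1, hP.2⟩
  have hμ := memLp_id_two_of_lintegral_sq_ne_top hμ2
  have hν := memLp_id_two_of_lintegral_sq_ne_top hν2
  rw [(isCoupling_quantileCoupling μ ν).lintegral_sq_sub hμ hν,
    hcoupling.lintegral_sq_sub hμ hν]
  gcongr ENNReal.ofReal (_ - 2 * ?_)
  exact hcoupling.integral_fst_mul_snd_le_quantileCoupling hμ hν
end
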